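/- arXiv:2510.19308 — 4 statements merged into one kernel-verified Lean document; each statement's English description precedes it below -/
import Mathlib

section
/- For every homogeneous element G ∈ S of degree 4 and every D ∈ S with 2D = φ(f+2G) − (f+2G)², one has the congruence ρ(f·D) ≡ x²y²z²(xy+yz+xz)w² + ρ(f)·ρ(G)² modulo the ideal m^[4] = (x⁴, y⁴, z⁴, w⁴) of k[x,y,z,w]. -/
open MvPolynomial

set_option maxHeartbeats 2000000 in
/-- 7A₁ del Pezzo, key congruence.
`k` is an algebraically closed field of characteristic 2, `S = W(k)[x,y,z,w]` with
`deg x = deg y = deg z = 1`, `deg w = 2`, `φ : S → S` acts on coefficients by the Witt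
vector Frobenius and sends each variable to its square, `ρ : S → k[x,y,z,w]` reduces
coefficients via the 0-th Witt coordinate, and `f = w² + xyz(x+y+z)`.
For every homogeneous `G ∈ S` of degree 4 and every `D ∈ S` with
`2D = φ(f+2G) − (f+2G)²`, one has
`ρ(f·D) ≡ x²y²z²(xy+yz+xz)w² + ρ(f)·ρ(G)²  mod (x⁴, y⁴, z⁴, w⁴)`. -/
theorem stmt1 (k : Type*) [Field k] [IsAlgClosed k] [CharP k 2]
    (φ : MvPolynomial (Fin 4) (WittVector 2 k) →+* MvPolynomial (Fin 4) (WittVector 2 k))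
    (hφC : ∀ a : WittVector 2 k, φ (C a) = C (WittVector.frobenius a))
    (hφX : ∀ i : Fin 4, φ (X i) = X i ^ 2)
    (r : WittVector 2 k →+* k)
    (hr : ∀ a : WittVector 2 k, r a = a.coeff 0)
    (f : MvPolynomial (Fin 4) (WittVector 2 k))
    (hf : f = X 3 ^ 2 + X 0 * X 1 * X 2 * (X 0 + X 1 + X 2))
    (G : MvPolynomial (Fin 4) (WittVector 2 k))
    (hG : MvPolynomial.IsWeightedHomogeneous (fun i : Fin 4 => if i = 3 then 2 else 1) G 4)
    (D : MvPolynomial (Fin 4) (WittVector 2 k))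
    (hD : 2 * D = φ (f + 2 * G) - (f + 2 * G) ^ 2) :
    MvPolynomial.map r (f * D) -
        (X 0 ^ 2 * X 1 ^ 2 * X 2 ^ 2 * (X 0 * X 1 + X 1 * X 2 + X 0 * X 2) * X 3 ^ 2
          + MvPolynomial.map r f * (MvPolynomial.map r G) ^ 2)
      ∈ Ideal.span ({X 0 ^ 4, X 1 ^ 4, X 2 ^ 4, X 3 ^ 4} : Set (MvPolynomial (Fin 4) k)) := by
  subst hf
  haveI : CharP (MvPolynomial (Fin 4) k) 2 :=
    charP_of_injective_ringHom (C_injective (Fin 4) k) 2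
  have h20 : (2 : MvPolynomial (Fin 4) k) = 0 := by
    have := CharP.cast_eq_zero (MvPolynomial (Fin 4) k) 2
    exact_mod_cast this
  -- `map r ∘ φ` is squaring after `map r`
  have hkey : ∀ p : MvPolynomial (Fin 4) (WittVector 2 k),
      MvPolynomial.map r (φ p) = (MvPolynomial.map r p) ^ 2 := by
    intro p
    induction p using MvPolynomial.induction_on with
    | C a =>
        rw [hφC, MvPolynomial.map_C, MvPolynomial.map_C, ← C_pow]
        congr 1
        rw [hr, hr, WittVector.coeff_frobenius_charP]
    | add p q hp hq =>
        rw [map_add, map_add, map_add, hp, hq, add_pow_char]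
    | mul_X p i hp =>
        rw [map_mul, hφX, map_mul, map_pow, MvPolynomial.map_X, hp,
          map_mul, MvPolynomial.map_X, mul_pow]
  -- 2 is a nonzerodivisor upstairs
  have h2 : (2 : MvPolynomial (Fin 4) (WittVector 2 k)) ≠ 0 := by
    rw [show (2 : MvPolynomial (Fin 4) (WittVector 2 k)) = C (2 : WittVector 2 k) from
      (map_ofNat C 2).symm]
    rw [map_ne_zero_iff _ (C_injective (Fin 4) (WittVector 2 k))]
    exact_mod_cast WittVector.p_nonzero 2 k
  -- solve for D
  have hDE : D = φ G -
      (X 0 ^ 2 * X 1 ^ 2 * X 2 ^ 2 * (X 0 * X 1 + X 1 * X 2 + X 0 * X 2)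
        + X 3 ^ 2 * (X 0 * X 1 * X 2 * (X 0 + X 1 + X 2))
        + 2 * ((X 3 ^ 2 + X 0 * X 1 * X 2 * (X 0 + X 1 + X 2)) * G) + 2 * G ^ 2) := by
    apply mul_left_cancel₀ h2
    rw [hD]
    simp only [map_add, map_mul, map_pow, hφX, map_ofNat]
    ring
  -- the image of D downstairs
  have hE : MvPolynomial.map r D =
      (MvPolynomial.map r G) ^ 2
        + X 0 ^ 2 * X 1 ^ 2 * X 2 ^ 2 * (X 0 * X 1 + X 1 * X 2 + X 0 * X 2)
        + X 3 ^ 2 * (X 0 * X 1 * X 2 * (X 0 + X 1 + X 2)) := by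
    rw [hDE]
    simp only [map_sub, map_add, map_mul, map_pow, MvPolynomial.map_X, map_ofNat, hkey]
    linear_combination (-(X 0 ^ 2 * X 1 ^ 2 * X 2 ^ 2 * (X 0 * X 1 + X 1 * X 2 + X 0 * X 2))
      - X 3 ^ 2 * (X 0 * X 1 * X 2 * (X 0 + X 1 + X 2))
      - (X 3 ^ 2 + X 0 * X 1 * X 2 * (X 0 + X 1 + X 2)) * MvPolynomial.map r G
      - (MvPolynomial.map r G) ^ 2 : MvPolynomial (Fin 4) k) * h20
  -- the main identity
  have hmain : MvPolynomial.map r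
        ((X 3 ^ 2 + X 0 * X 1 * X 2 * (X 0 + X 1 + X 2)) * D) -
      (X 0 ^ 2 * X 1 ^ 2 * X 2 ^ 2 * (X 0 * X 1 + X 1 * X 2 + X 0 * X 2) * X 3 ^ 2
        + MvPolynomial.map r (X 3 ^ 2 + X 0 * X 1 * X 2 * (X 0 + X 1 + X 2))
          * (MvPolynomial.map r G) ^ 2)
      = (X 0 * X 1 ^ 4 * X 2 ^ 3 + X 0 * X 1 ^ 3 * X 2 ^ 4 + X 1 ^ 5 * X 2 ^ 3
            + X 1 ^ 3 * X 2 ^ 5 + X 1 ^ 4 * X 2 ^ 4 + X 3 ^ 2 * X 1 ^ 2 * X 2 ^ 2) * X 0 ^ 4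
        + (X 0 ^ 3 * X 1 * X 2 ^ 4 + X 3 ^ 2 * X 0 ^ 2 * X 2 ^ 2) * X 1 ^ 4
        + (X 0 ^ 3 * X 1 ^ 4 * X 2 + X 3 ^ 2 * X 0 ^ 2 * X 1 ^ 2) * X 2 ^ 4
        + (X 0 ^ 2 * X 1 * X 2 + X 0 * X 1 ^ 2 * X 2 + X 0 * X 1 * X 2 ^ 2) * X 3 ^ 4 := by
    rw [map_mul, hE]
    simp only [map_add, map_mul, map_pow, MvPolynomial.map_X]
    linear_combination (X 0 ^ 4 * X 1 ^ 4 * X 2 ^ 4 + X 3 ^ 2 * X 0 ^ 3 * X 1 ^ 3 * X 2 ^ 2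
      + X 3 ^ 2 * X 0 ^ 3 * X 1 ^ 2 * X 2 ^ 3
      + X 3 ^ 2 * X 0 ^ 2 * X 1 ^ 3 * X 2 ^ 3 : MvPolynomial (Fin 4) k) * h20
  rw [hmain]
  have mem : ∀ g : MvPolynomial (Fin 4) k,
      g ∈ ({X 0 ^ 4, X 1 ^ 4, X 2 ^ 4, X 3 ^ 4} : Set (MvPolynomial (Fin 4) k)) →
      ∀ c : MvPolynomial (Fin 4) k, c * g ∈
        Ideal.span ({X 0 ^ 4, X 1 ^ 4, X 2 ^ 4, X 3 ^ 4} : Set (MvPolynomial (Fin 4) k)) :=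
    fun g hg c => Ideal.mul_mem_left _ _ (Ideal.subset_span hg)
  refine Ideal.add_mem _ (Ideal.add_mem _ (Ideal.add_mem _ ?_ ?_) ?_) ?_
  · exact mem _ (by simp) _
  · exact mem _ (by simp) _
  · exact mem _ (by simp) _
  · exact mem _ (by simp) _
end

section
/- The element ρ(f) lies in the ideal m^[2] = (x², y², z², w²) of k[x,y,z,w], and for every D ∈ S with 2D = φ(f) − f², the element ρ(f·D) does not lie in the ideal m^[4] = (x⁴, y⁴, z⁴, w⁴). (This is the computational content, via the Fedder-type criterion, of the statement that W(k)[x,y,z,w]/(f) has quasi-F-splitting height exactly 2.) -/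
open MvPolynomial

set_option maxHeartbeats 1600000

/-- 7A₁ del Pezzo: `W(k)[x,y,z,w]/(f)` has quasi-F-splitting height 2.
With notation as in the 7A₁ setting (`f = w² + xyz(x+y+z)`):
`ρ(f) ∈ (x², y², z², w²)`, and for every `D ∈ S` with `2D = φ(f) − f²`,
`ρ(f·D) ∉ (x⁴, y⁴, z⁴, w⁴)`. -/
theorem stmt2 (k : Type*) [Field k] [IsAlgClosed k] [CharP k 2]
    (φ : MvPolynomial (Fin 4) (WittVector 2 k) →+* MvPolynomial (Fin 4) (WittVector 2 k))
    (hφC : ∀ a : WittVector 2 k, φ (C a) = C (WittVector.frobenius a))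
    (hφX : ∀ i : Fin 4, φ (X i) = X i ^ 2)
    (r : WittVector 2 k →+* k)
    (hr : ∀ a : WittVector 2 k, r a = a.coeff 0)
    (f : MvPolynomial (Fin 4) (WittVector 2 k))
    (hf : f = X 3 ^ 2 + X 0 * X 1 * X 2 * (X 0 + X 1 + X 2)) :
    MvPolynomial.map r f
        ∈ Ideal.span ({X 0 ^ 2, X 1 ^ 2, X 2 ^ 2, X 3 ^ 2} : Set (MvPolynomial (Fin 4) k)) ∧
    ∀ D : MvPolynomial (Fin 4) (WittVector 2 k), 2 * D = φ f - f ^ 2 →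
      MvPolynomial.map r (f * D)
        ∉ Ideal.span ({X 0 ^ 4, X 1 ^ 4, X 2 ^ 4, X 3 ^ 4} : Set (MvPolynomial (Fin 4) k)) := by
  haveI : Fact (Nat.Prime 2) := ⟨Nat.prime_two⟩
  constructor
  · -- membership of ρ(f)
    have h0 : (X 0 : MvPolynomial (Fin 4) k) ^ 2 ∈
        Ideal.span ({X 0 ^ 2, X 1 ^ 2, X 2 ^ 2, X 3 ^ 2} : Set (MvPolynomial (Fin 4) k)) :=
      Ideal.subset_span (Set.mem_insert _ _)
    have h1 : (X 1 : MvPolynomial (Fin 4) k) ^ 2 ∈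
        Ideal.span ({X 0 ^ 2, X 1 ^ 2, X 2 ^ 2, X 3 ^ 2} : Set (MvPolynomial (Fin 4) k)) :=
      Ideal.subset_span (Set.mem_insert_of_mem _ (Set.mem_insert _ _))
    have h2 : (X 2 : MvPolynomial (Fin 4) k) ^ 2 ∈
        Ideal.span ({X 0 ^ 2, X 1 ^ 2, X 2 ^ 2, X 3 ^ 2} : Set (MvPolynomial (Fin 4) k)) :=
      Ideal.subset_span (Set.mem_insert_of_mem _ (Set.mem_insert_of_mem _ (Set.mem_insert _ _)))
    have h3 : (X 3 : MvPolynomial (Fin 4) k) ^ 2 ∈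
        Ideal.span ({X 0 ^ 2, X 1 ^ 2, X 2 ^ 2, X 3 ^ 2} : Set (MvPolynomial (Fin 4) k)) :=
      Ideal.subset_span (Set.mem_insert_of_mem _ (Set.mem_insert_of_mem _
        (Set.mem_insert_of_mem _ rfl)))
    have hmap : MvPolynomial.map r f
        = (X 1 * X 2) * X 0 ^ 2 + (X 0 * X 2) * X 1 ^ 2 + (X 0 * X 1) * X 2 ^ 2
          + 1 * X 3 ^ 2 := by
      rw [hf]
      simp only [map_add, map_mul, map_pow, MvPolynomial.map_X]
      ring
    rw [hmap]
    exact add_mem (add_mem (add_mem (Ideal.mul_mem_left _ _ h0) (Ideal.mul_mem_left _ _ h1))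
      (Ideal.mul_mem_left _ _ h2)) (Ideal.mul_mem_left _ _ h3)
  · intro D hD
    -- Step 1: identify D explicitly
    have hφf : φ f = X 3 ^ 4 + (X 0 * X 1 * X 2) ^ 2 * (X 0 ^ 2 + X 1 ^ 2 + X 2 ^ 2) := by
      rw [hf]
      simp only [map_add, map_mul, map_pow, hφX]
      ring
    have h2ne : (2 : MvPolynomial (Fin 4) (WittVector 2 k)) ≠ 0 := by
      have h2W : (2 : WittVector 2 k) ≠ 0 := by
        have := WittVector.p_nonzero 2 k
        exact_mod_cast this
      have hC2 : (C (2 : WittVector 2 k) : MvPolynomial (Fin 4) (WittVector 2 k)) = 2 := by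
        rw [show (2 : WittVector 2 k) = 1 + 1 from one_add_one_eq_two.symm, map_add, map_one,
          one_add_one_eq_two]
      intro h
      apply h2W
      have hC : (C (2 : WittVector 2 k) : MvPolynomial (Fin 4) (WittVector 2 k)) = C 0 := by
        rw [hC2, h, map_zero]
      exact MvPolynomial.C_injective _ _ hC
    have hDval : D = -(X 3 ^ 2 * (X 0 * X 1 * X 2 * (X 0 + X 1 + X 2))
        + (X 0 * X 1 * X 2) ^ 2 * (X 0 * X 1 + X 1 * X 2 + X 0 * X 2)) := by
      have h2D : (2 : MvPolynomial (Fin 4) (WittVector 2 k)) * D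
          = 2 * (-(X 3 ^ 2 * (X 0 * X 1 * X 2 * (X 0 + X 1 + X 2))
            + (X 0 * X 1 * X 2) ^ 2 * (X 0 * X 1 + X 1 * X 2 + X 0 * X 2))) := by
        rw [hD, hφf, hf]; ring
      exact mul_left_cancel₀ h2ne h2D
    -- Step 2: compute ρ(f·D)
    have hP : MvPolynomial.map r (f * D)
        = ((X 3 : MvPolynomial (Fin 4) k) ^ 2 + X 0 * X 1 * X 2 * (X 0 + X 1 + X 2))
          * (-(X 3 ^ 2 * (X 0 * X 1 * X 2 * (X 0 + X 1 + X 2))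
            + (X 0 * X 1 * X 2) ^ 2 * (X 0 * X 1 + X 1 * X 2 + X 0 * X 2))) := by
      rw [hDval, hf]
      simp only [map_mul, map_add, map_neg, map_pow, MvPolynomial.map_X]
    intro hmem
    rw [hP] at hmem
    -- Step 3: reduce modulo the monomial ideal
    set I : Ideal (MvPolynomial (Fin 4) k) :=
      Ideal.span ({X 0 ^ 4, X 1 ^ 4, X 2 ^ 4, X 3 ^ 4} : Set (MvPolynomial (Fin 4) k)) with hI
    have g0 : (X 0 : MvPolynomial (Fin 4) k) ^ 4 ∈ I := Ideal.subset_span (Set.mem_insert _ _)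
    have g1 : (X 1 : MvPolynomial (Fin 4) k) ^ 4 ∈ I :=
      Ideal.subset_span (Set.mem_insert_of_mem _ (Set.mem_insert _ _))
    have g2 : (X 2 : MvPolynomial (Fin 4) k) ^ 4 ∈ I :=
      Ideal.subset_span (Set.mem_insert_of_mem _ (Set.mem_insert_of_mem _ (Set.mem_insert _ _)))
    have g3 : (X 3 : MvPolynomial (Fin 4) k) ^ 4 ∈ I :=
      Ideal.subset_span (Set.mem_insert_of_mem _ (Set.mem_insert_of_mem _
        (Set.mem_insert_of_mem _ rfl)))
    have hrem : ((-3 : MvPolynomial (Fin 4) k)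
        * ((X 0 * X 1 * X 2) ^ 2 * X 3 ^ 2 * (X 0 * X 1 + X 1 * X 2 + X 0 * X 2))) ∈ I := by
      have key : ((-3 : MvPolynomial (Fin 4) k)
          * ((X 0 * X 1 * X 2) ^ 2 * X 3 ^ 2 * (X 0 * X 1 + X 1 * X 2 + X 0 * X 2)))
          = ((X 3 : MvPolynomial (Fin 4) k) ^ 2 + X 0 * X 1 * X 2 * (X 0 + X 1 + X 2))
            * (-(X 3 ^ 2 * (X 0 * X 1 * X 2 * (X 0 + X 1 + X 2))
              + (X 0 * X 1 * X 2) ^ 2 * (X 0 * X 1 + X 1 * X 2 + X 0 * X 2)))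
          - ((-(X 1 ^ 2 * X 2 ^ 2 * X 3 ^ 2 + X 0 * X 1 ^ 4 * X 2 ^ 3
                + X 0 * X 1 ^ 3 * X 2 ^ 4 + X 1 ^ 5 * X 2 ^ 3 + X 1 ^ 3 * X 2 ^ 5
                + 3 * X 1 ^ 4 * X 2 ^ 4)) * X 0 ^ 4
            + (-(X 0 ^ 2 * X 2 ^ 2 * X 3 ^ 2 + X 0 ^ 3 * X 1 * X 2 ^ 4
                + X 0 ^ 3 * X 2 ^ 5)) * X 1 ^ 4
            + (-(X 0 ^ 2 * X 1 ^ 2 * X 3 ^ 2)) * X 2 ^ 4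
            + (-(X 0 * X 1 * X 2 * (X 0 + X 1 + X 2))) * X 3 ^ 4) := by
        ring
      rw [key]
      exact Ideal.sub_mem _ hmem (add_mem (add_mem (add_mem
        (Ideal.mul_mem_left _ _ g0) (Ideal.mul_mem_left _ _ g1))
        (Ideal.mul_mem_left _ _ g2)) (Ideal.mul_mem_left _ _ g3))
    -- Step 4: the remainder is not in the monomial ideal
    have h3ne : (-3 : k) ≠ 0 := by
      have h2k : (2 : k) = 0 := by
        have := CharP.cast_eq_zero k 2
        exact_mod_cast this
      have : (-3 : k) = 1 := by linear_combination (-2 : k) * h2k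
      rw [this]; exact one_ne_zero
    -- write everything in monomial form
    set m1 : Fin 4 →₀ ℕ := Finsupp.single 0 3 + Finsupp.single 1 3
      + Finsupp.single 2 2 + Finsupp.single 3 2 with hm1
    set m2 : Fin 4 →₀ ℕ := Finsupp.single 0 2 + Finsupp.single 1 3
      + Finsupp.single 2 3 + Finsupp.single 3 2 with hm2
    set m3 : Fin 4 →₀ ℕ := Finsupp.single 0 3 + Finsupp.single 1 2
      + Finsupp.single 2 3 + Finsupp.single 3 2 with hm3
    have hrem_eq : ((-3 : MvPolynomial (Fin 4) k)
        * ((X 0 * X 1 * X 2) ^ 2 * X 3 ^ 2 * (X 0 * X 1 + X 1 * X 2 + X 0 * X 2)))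
        = C (-3 : k) * (monomial m1 1 + monomial m2 1 + monomial m3 1) := by
      rw [hm1, hm2, hm3]
      simp only [← X_pow_eq_monomial, monomial_add_single]
      have : (C (-3 : k) : MvPolynomial (Fin 4) k) = -3 := by
        simp [map_ofNat]
      rw [this]
      ring
    rw [hrem_eq] at hrem
    have hset : ({X 0 ^ 4, X 1 ^ 4, X 2 ^ 4, X 3 ^ 4} : Set (MvPolynomial (Fin 4) k))
        = (fun s => monomial s (1 : k)) ''
          ({Finsupp.single 0 4, Finsupp.single 1 4, Finsupp.single 2 4,
            Finsupp.single 3 4} : Set (Fin 4 →₀ ℕ)) := by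
      simp [Set.image_insert_eq, X_pow_eq_monomial]
    rw [hI, hset, mem_ideal_span_monomial_image] at hrem
    have hm1m2 : m1 ≠ m2 := by
      intro h
      have := DFunLike.congr_fun h 0
      simp [hm1, hm2, Finsupp.single_apply] at this
    have hm1m3 : m1 ≠ m3 := by
      intro h
      have := DFunLike.congr_fun h 1
      simp [hm1, hm3, Finsupp.single_apply] at this
    have hcoeff : MvPolynomial.coeff m1
        (C (-3 : k) * (monomial m1 1 + monomial m2 1 + monomial m3 1)) = -3 := by
      simp [coeff_C_mul, coeff_monomial, hm1m2.symm, hm1m3.symm,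
        Ne.symm hm1m2, Ne.symm hm1m3]
    have hsupp : m1 ∈ (C (-3 : k)
        * (monomial m1 1 + monomial m2 1 + monomial m3 1)).support := by
      rw [mem_support_iff, hcoeff]; exact h3ne
    obtain ⟨si, hsi, hle⟩ := hrem m1 hsupp
    have hm1app : ∀ i : Fin 4, m1 i ≤ 3 := by
      intro i
      fin_cases i <;> simp [hm1, Finsupp.single_apply]
    rcases hsi with h | h | h | h <;> subst h <;>
      · rw [Finsupp.single_le_iff] at hle
        exact absurd (hle.trans (hm1app _)) (by norm_num)
end

section
/- For every homogeneous element G ∈ S of degree 4 and every D ∈ S with 2D = φ(f+2G) − (f+2G)², it is not the case that both ρ(f·D) ∈ m^[4] = (x⁴, y⁴, z⁴, w⁴) and ρ(f·D³) ∈ m^[8] = (x⁸, y⁸, z⁸, w⁸). (This is the computational content of the statement that W(k)[x,y,z,w]/(f+2G) is 3-quasi-F-split for every homogeneous G of degree 4.) -/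
set_option linter.unusedSectionVars false

open MvPolynomial Finsupp

namespace Stmt4Aux

/-- exponent vector -/
noncomputable def e (a b c d : ℕ) : Fin 4 →₀ ℕ :=
  Finsupp.single 0 a + Finsupp.single 1 b + Finsupp.single 2 c + Finsupp.single 3 d

@[simp] lemma e_apply0 (a b c d : ℕ) : e a b c d 0 = a := by
  simp [e, Finsupp.single_apply]
@[simp] lemma e_apply1 (a b c d : ℕ) : e a b c d 1 = b := by
  simp [e, Finsupp.single_apply]
@[simp] lemma e_apply2 (a b c d : ℕ) : e a b c d 2 = c := by
  simp [e, Finsupp.single_apply]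
@[simp] lemma e_apply3 (a b c d : ℕ) : e a b c d 3 = d := by
  simp [e, Finsupp.single_apply]

lemma eq_e (m : Fin 4 →₀ ℕ) : m = e (m 0) (m 1) (m 2) (m 3) := by
  ext i
  fin_cases i <;> simp

lemma e_eq_e {a b c d a' b' c' d' : ℕ} :
    e a b c d = e a' b' c' d' ↔ a = a' ∧ b = b' ∧ c = c' ∧ d = d' := by
  constructor
  · intro h
    exact ⟨by simpa using DFunLike.congr_fun h 0, by simpa using DFunLike.congr_fun h 1,
      by simpa using DFunLike.congr_fun h 2, by simpa using DFunLike.congr_fun h 3⟩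
  · rintro ⟨rfl, rfl, rfl, rfl⟩; rfl

lemma e_le_e {a b c d a' b' c' d' : ℕ} :
    e a b c d ≤ e a' b' c' d' ↔ a ≤ a' ∧ b ≤ b' ∧ c ≤ c' ∧ d ≤ d' := by
  rw [Finsupp.le_def]
  constructor
  · intro h
    exact ⟨by simpa using h 0, by simpa using h 1, by simpa using h 2, by simpa using h 3⟩
  · rintro ⟨h0, h1, h2, h3⟩ i
    fin_cases i <;> simpa

lemma e_add (a b c d a' b' c' d' : ℕ) :
    e a b c d + e a' b' c' d' = e (a + a') (b + b') (c + c') (d + d') := by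
  ext i; fin_cases i <;> simp

lemma e_sub (a b c d a' b' c' d' : ℕ) :
    e a b c d - e a' b' c' d' = e (a - a') (b - b') (c - c') (d - d') := by
  ext i; fin_cases i <;> simp [Finsupp.tsub_apply]

lemma smul_e (n a b c d : ℕ) : n • e a b c d = e (n * a) (n * b) (n * c) (n * d) := by
  ext i; fin_cases i <;> simp

lemma weight_e (a b c d : ℕ) :
    Finsupp.weight (fun i : Fin 4 => if i = 3 then 2 else 1) (e a b c d) = a + b + c + 2 * d := by
  have ws : ∀ (i : Fin 4) (n : ℕ), Finsupp.weight (fun i : Fin 4 => if i = 3 then 2 else 1)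
      (Finsupp.single i n) = n • (if i = 3 then 2 else 1) := by
    intro i n
    simp [Finsupp.weight_apply, Finsupp.sum_single_index]
  simp only [e, map_add, ws]
  rw [if_neg (by decide), if_neg (by decide), if_neg (by decide), if_pos (by trivial)]
  simp [smul_eq_mul]
  omega


section Poly
variable {k : Type*} [CommRing k] [CharP k 2]

noncomputable def me (a b c d : ℕ) : MvPolynomial (Fin 4) k := monomial (e a b c d) 1

@[simp] lemma coeff_me (a b c d a' b' c' d' : ℕ) :
    coeff (e a' b' c' d') (me a b c d : MvPolynomial (Fin 4) k) =
      if a = a' ∧ b = b' ∧ c = c' ∧ d = d' then 1 else 0 := by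
  simp only [me, MvPolynomial.coeff_monomial, e_eq_e]

@[simp] lemma me_mul (a b c d a' b' c' d' : ℕ) :
    (me a b c d : MvPolynomial (Fin 4) k) * me a' b' c' d' =
      me (a + a') (b + b') (c + c') (d + d') := by
  simp [me, MvPolynomial.monomial_mul, e_add]

@[simp] lemma coeff_me_mul (a b c d a' b' c' d' : ℕ) (A : MvPolynomial (Fin 4) k) :
    coeff (e a' b' c' d') (me a b c d * A) =
      if a ≤ a' ∧ b ≤ b' ∧ c ≤ c' ∧ d ≤ d' then
        coeff (e (a' - a) (b' - b) (c' - c) (d' - d)) A else 0 := by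
  rw [me, MvPolynomial.coeff_monomial_mul']
  simp only [e_le_e, e_sub, one_mul]

lemma mul_self_expand (A : MvPolynomial (Fin 4) k) :
    A * A = ∑ m ∈ A.support, monomial (2 • m) (coeff m A ^ 2) := by
  have h2 : A * A = A ^ 2 := (pow_two A).symm
  rw [h2]
  conv_lhs => rw [← MvPolynomial.support_sum_monomial_coeff A]
  rw [sum_pow_char]
  simp [MvPolynomial.monomial_pow]

@[simp] lemma coeff_mul_self (a b c d : ℕ) (A : MvPolynomial (Fin 4) k) :
    coeff (e a b c d) (A * A) =
      if a % 2 = 0 ∧ b % 2 = 0 ∧ c % 2 = 0 ∧ d % 2 = 0 then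
        coeff (e (a / 2) (b / 2) (c / 2) (d / 2)) A ^ 2 else 0 := by
  rw [mul_self_expand, MvPolynomial.coeff_sum]
  simp_rw [MvPolynomial.coeff_monomial]
  by_cases hp : a % 2 = 0 ∧ b % 2 = 0 ∧ c % 2 = 0 ∧ d % 2 = 0
  · rw [if_pos hp]
    have hkey : ∀ m : Fin 4 →₀ ℕ, 2 • m = e a b c d ↔ m = e (a/2) (b/2) (c/2) (d/2) := by
      intro m
      constructor
      · intro h
        rw [eq_e m, smul_e] at h
        rw [e_eq_e] at h
        rw [eq_e m, e_eq_e]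
        omega
      · rintro rfl
        rw [smul_e, e_eq_e]
        omega
    rw [Finset.sum_eq_single (e (a/2) (b/2) (c/2) (d/2))]
    · rw [if_pos ((hkey _).mpr rfl)]
    · intro m _ hm
      rw [if_neg (fun h => hm ((hkey m).mp h))]
    · intro hme
      rw [MvPolynomial.notMem_support_iff.mp hme]
      simp
  · rw [if_neg hp]
    apply Finset.sum_eq_zero
    intro m _
    rw [if_neg]
    intro h
    rw [eq_e m, smul_e, e_eq_e] at h
    omega

lemma coeff_mul_self_mul (A B : MvPolynomial (Fin 4) k) (u : Fin 4 →₀ ℕ) :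
    coeff u ((A * A) * B) =
      ∑ m ∈ A.support, if 2 • m ≤ u then coeff m A ^ 2 * coeff (u - 2 • m) B else 0 := by
  rw [mul_self_expand, Finset.sum_mul, MvPolynomial.coeff_sum]
  simp_rw [MvPolynomial.coeff_monomial_mul']


/-- the weight function -/
abbrev wgt : Fin 4 → ℕ := fun i => if i = 3 then 2 else 1

lemma weight_eq (m : Fin 4 →₀ ℕ) :
    Finsupp.weight wgt m = m 0 + m 1 + m 2 + 2 * m 3 := by
  conv_lhs => rw [eq_e m]
  rw [weight_e]

lemma coeff_g_zero {g : MvPolynomial (Fin 4) k}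
    (hg : IsWeightedHomogeneous wgt g 4) (a b c d : ℕ) (h : a + b + c + 2 * d ≠ 4) :
    coeff (e a b c d) g = 0 := by
  apply hg.coeff_eq_zero
  rw [weight_e]
  exact h

lemma coeff_g3_single {g : MvPolynomial (Fin 4) k}
    (hg : IsWeightedHomogeneous wgt g 4)
    (a b c d a1 b1 c1 d1 a2 b2 c2 d2 : ℕ)
    (hs1 : 2 * a1 + a2 = a) (hs2 : 2 * b1 + b2 = b) (hs3 : 2 * c1 + c2 = c)
    (hs4 : 2 * d1 + d2 = d)
    (hw1 : a1 + b1 + c1 + 2 * d1 = 4) (hw2 : a2 + b2 + c2 + 2 * d2 = 4)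
    (huniq : ∀ x y z t : ℕ, x + y + z + 2 * t = 4 → 2 * x ≤ a → 2 * y ≤ b → 2 * z ≤ c →
      2 * t ≤ d → (a - 2 * x) + (b - 2 * y) + (c - 2 * z) + 2 * (d - 2 * t) = 4 →
      x = a1 ∧ y = b1 ∧ z = c1 ∧ t = d1) :
    coeff (e a b c d) ((g * g) * g) =
      coeff (e a1 b1 c1 d1) g ^ 2 * coeff (e a2 b2 c2 d2) g := by
  rw [coeff_mul_self_mul]
  rw [Finset.sum_eq_single (e a1 b1 c1 d1)]
  · rw [if_pos (by rw [smul_e, e_le_e]; omega)]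
    rw [smul_e, e_sub]
    have he : e (a - 2 * a1) (b - 2 * b1) (c - 2 * c1) (d - 2 * d1) = e a2 b2 c2 d2 := by
      rw [e_eq_e]; omega
    rw [he]
  · intro m hmem hne
    by_cases hc : 2 • m ≤ e a b c d
    · rw [if_pos hc]
      by_cases hz : coeff (e a b c d - 2 • m) g = 0
      · rw [hz, mul_zero]
      · exfalso
        apply hne
        have hcv : ∀ i : Fin 4, 2 * m i ≤ (e a b c d) i := fun i => by
          simpa [Finsupp.smul_apply] using Finsupp.le_def.mp hc i
        have hwm : m 0 + m 1 + m 2 + 2 * m 3 = 4 := by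
          rw [← weight_eq]
          exact hg (MvPolynomial.mem_support_iff.mp hmem)
        have hwz : (e a b c d - 2 • m) 0 + (e a b c d - 2 • m) 1 + (e a b c d - 2 • m) 2
            + 2 * ((e a b c d - 2 • m) 3) = 4 := by
          rw [← weight_eq]
          exact hg hz
        simp only [Finsupp.tsub_apply, Finsupp.smul_apply, smul_eq_mul,
          e_apply0, e_apply1, e_apply2, e_apply3] at hwz
        have h0 := hcv 0; have h1 := hcv 1; have h2 := hcv 2; have h3 := hcv 3
        simp only [e_apply0, e_apply1, e_apply2, e_apply3] at h0 h1 h2 h3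
        obtain ⟨k0, k1, k2, k3⟩ := huniq (m 0) (m 1) (m 2) (m 3) hwm h0 h1 h2 h3 hwz
        conv_lhs => rw [eq_e m]
        rw [e_eq_e]
        exact ⟨k0, k1, k2, k3⟩
    · rw [if_neg hc]
  · intro h0
    rw [MvPolynomial.notMem_support_iff.mp h0]
    simp


lemma coeff_g3_triple {g : MvPolynomial (Fin 4) k}
    (hg : IsWeightedHomogeneous wgt g 4) :
    coeff (e 2 2 2 3) ((g * g) * g) =
      coeff (e 0 1 1 1) g ^ 2 * coeff (e 2 0 0 1) g
      + coeff (e 1 0 1 1) g ^ 2 * coeff (e 0 2 0 1) g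
      + coeff (e 1 1 0 1) g ^ 2 * coeff (e 0 0 2 1) g := by
  rw [coeff_mul_self_mul]
  set T : Finset (Fin 4 →₀ ℕ) := {e 0 1 1 1, e 1 0 1 1, e 1 1 0 1} with hT
  set F : (Fin 4 →₀ ℕ) → k := fun m =>
    if 2 • m ≤ e 2 2 2 3 then coeff m g ^ 2 * coeff (e 2 2 2 3 - 2 • m) g else 0 with hF
  have hFzero : ∀ m, m ∉ g.support → F m = 0 := by
    intro m hm
    simp only [hF]
    rw [MvPolynomial.notMem_support_iff.mp hm]
    simp
  have hFT : ∀ m ∈ g.support, m ∉ T → F m = 0 := by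
    intro m hmem hmT
    simp only [hF]
    by_cases hc : 2 • m ≤ e 2 2 2 3
    · rw [if_pos hc]
      by_cases hz : coeff (e 2 2 2 3 - 2 • m) g = 0
      · rw [hz, mul_zero]
      · exfalso
        apply hmT
        have hcv : ∀ i : Fin 4, 2 * m i ≤ (e 2 2 2 3) i := fun i => by
          simpa [Finsupp.smul_apply] using Finsupp.le_def.mp hc i
        have hwm : m 0 + m 1 + m 2 + 2 * m 3 = 4 := by
          rw [← weight_eq]
          exact hg (MvPolynomial.mem_support_iff.mp hmem)
        have hwz : (e 2 2 2 3 - 2 • m) 0 + (e 2 2 2 3 - 2 • m) 1 + (e 2 2 2 3 - 2 • m) 2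
            + 2 * ((e 2 2 2 3 - 2 • m) 3) = 4 := by
          rw [← weight_eq]
          exact hg hz
        simp only [Finsupp.tsub_apply, Finsupp.smul_apply, smul_eq_mul,
          e_apply0, e_apply1, e_apply2, e_apply3] at hwz
        have h0 := hcv 0; have h1 := hcv 1; have h2 := hcv 2; have h3 := hcv 3
        simp only [e_apply0, e_apply1, e_apply2, e_apply3] at h0 h1 h2 h3
        have : (m 0 = 0 ∧ m 1 = 1 ∧ m 2 = 1 ∧ m 3 = 1)
            ∨ (m 0 = 1 ∧ m 1 = 0 ∧ m 2 = 1 ∧ m 3 = 1)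
            ∨ (m 0 = 1 ∧ m 1 = 1 ∧ m 2 = 0 ∧ m 3 = 1) := by omega
        rw [hT]
        simp only [Finset.mem_insert, Finset.mem_singleton]
        rcases this with h | h | h
        · left
          conv_lhs => rw [eq_e m]
          rw [e_eq_e]; exact ⟨h.1, h.2.1, h.2.2.1, h.2.2.2⟩
        · right; left
          conv_lhs => rw [eq_e m]
          rw [e_eq_e]; exact ⟨h.1, h.2.1, h.2.2.1, h.2.2.2⟩
        · right; right
          conv_lhs => rw [eq_e m]
          rw [e_eq_e]; exact ⟨h.1, h.2.1, h.2.2.1, h.2.2.2⟩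
    · rw [if_neg hc]
  have hsub1 : ∑ m ∈ g.support, F m = ∑ m ∈ g.support ∪ T, F m :=
    Finset.sum_subset Finset.subset_union_left
      (fun m _ hm => hFzero m hm)
  have hsub2 : ∑ m ∈ T, F m = ∑ m ∈ g.support ∪ T, F m :=
    Finset.sum_subset Finset.subset_union_right
      (fun m hmu hmT => hFT m (by
        rcases Finset.mem_union.mp hmu with h | h
        · exact h
        · exact absurd h hmT) hmT)
  rw [hsub1, ← hsub2]
  have hne1 : (e 0 1 1 1 : Fin 4 →₀ ℕ) ∉ ({e 1 0 1 1, e 1 1 0 1} : Finset (Fin 4 →₀ ℕ)) := by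
    simp only [Finset.mem_insert, Finset.mem_singleton, e_eq_e]
    omega
  have hne2 : (e 1 0 1 1 : Fin 4 →₀ ℕ) ∉ ({e 1 1 0 1} : Finset (Fin 4 →₀ ℕ)) := by
    simp only [Finset.mem_singleton, e_eq_e]
    omega
  rw [hT, Finset.sum_insert hne1, Finset.sum_insert hne2, Finset.sum_singleton]
  simp only [hF]
  rw [if_pos (by rw [smul_e, e_le_e]; omega), if_pos (by rw [smul_e, e_le_e]; omega),
    if_pos (by rw [smul_e, e_le_e]; omega)]
  rw [smul_e, smul_e, smul_e, e_sub, e_sub, e_sub]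
  norm_num
  ring


lemma X_as_me_0 : (X 0 : MvPolynomial (Fin 4) k) = me 1 0 0 0 := by
  have he : e 1 0 0 0 = Finsupp.single (0 : Fin 4) 1 := by
    ext i; fin_cases i <;> simp
  rw [me, he, ← MvPolynomial.X_pow_eq_monomial, pow_one]
lemma X_as_me_1 : (X 1 : MvPolynomial (Fin 4) k) = me 0 1 0 0 := by
  have he : e 0 1 0 0 = Finsupp.single (1 : Fin 4) 1 := by
    ext i; fin_cases i <;> simp
  rw [me, he, ← MvPolynomial.X_pow_eq_monomial, pow_one]
lemma X_as_me_2 : (X 2 : MvPolynomial (Fin 4) k) = me 0 0 1 0 := by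
  have he : e 0 0 1 0 = Finsupp.single (2 : Fin 4) 1 := by
    ext i; fin_cases i <;> simp
  rw [me, he, ← MvPolynomial.X_pow_eq_monomial, pow_one]
lemma X_as_me_3 : (X 3 : MvPolynomial (Fin 4) k) = me 0 0 0 1 := by
  have he : e 0 0 0 1 = Finsupp.single (3 : Fin 4) 1 := by
    ext i; fin_cases i <;> simp
  rw [me, he, ← MvPolynomial.X_pow_eq_monomial, pow_one]

lemma span_coeff_zero (p : MvPolynomial (Fin 4) k) (q : ℕ)
    (hp : p ∈ Ideal.span ({X 0 ^ q, X 1 ^ q, X 2 ^ q, X 3 ^ q} : Set (MvPolynomial (Fin 4) k)))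
    (N : Fin 4 →₀ ℕ) (h0 : N 0 < q) (h1 : N 1 < q) (h2 : N 2 < q) (h3 : N 3 < q) :
    coeff N p = 0 := by
  have key : ∀ (i : Fin 4) (c : MvPolynomial (Fin 4) k), N i < q →
      coeff N (c * X i ^ q) = 0 := by
    intro i c hi
    rw [MvPolynomial.X_pow_eq_monomial, MvPolynomial.coeff_mul_monomial']
    rw [if_neg]
    intro hle
    have := Finsupp.single_le_iff.mp hle
    omega
  rw [Ideal.mem_span_insert] at hp
  obtain ⟨c0, z0, hz0, rfl⟩ := hp
  rw [Ideal.mem_span_insert] at hz0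
  obtain ⟨c1, z1, hz1, rfl⟩ := hz0
  rw [Ideal.mem_span_insert] at hz1
  obtain ⟨c2, z2, hz2, rfl⟩ := hz1
  rw [Ideal.mem_span_singleton] at hz2
  obtain ⟨c3, rfl⟩ := hz2
  simp only [MvPolynomial.coeff_add]
  rw [key 0 c0 h0, key 1 c1 h1, key 2 c2 h2, mul_comm, key 3 c3 h3]
  norm_num

end Poly
end Stmt4Aux

open Stmt4Aux

set_option maxHeartbeats 4000000 in
/-- 7A₁ del Pezzo: every lift `W(k)[x,y,z,w]/(f+2G)` is 3-quasi-F-split.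
With notation as in the 7A₁ setting (`f = w² + xyz(x+y+z)`, `deg x = deg y = deg z = 1`,
`deg w = 2`): for every homogeneous `G ∈ S` of degree 4 and every `D ∈ S` with
`2D = φ(f+2G) − (f+2G)²`, it is not the case that both
`ρ(f·D) ∈ (x⁴, y⁴, z⁴, w⁴)` and `ρ(f·D³) ∈ (x⁸, y⁸, z⁸, w⁸)`. -/
theorem stmt4 (k : Type*) [Field k] [IsAlgClosed k] [CharP k 2]
    (φ : MvPolynomial (Fin 4) (WittVector 2 k) →+* MvPolynomial (Fin 4) (WittVector 2 k))
    (hφC : ∀ a : WittVector 2 k, φ (C a) = C (WittVector.frobenius a))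
    (hφX : ∀ i : Fin 4, φ (X i) = X i ^ 2)
    (r : WittVector 2 k →+* k)
    (hr : ∀ a : WittVector 2 k, r a = a.coeff 0)
    (f : MvPolynomial (Fin 4) (WittVector 2 k))
    (hf : f = X 3 ^ 2 + X 0 * X 1 * X 2 * (X 0 + X 1 + X 2))
    (G : MvPolynomial (Fin 4) (WittVector 2 k))
    (hG : MvPolynomial.IsWeightedHomogeneous (fun i : Fin 4 => if i = 3 then 2 else 1) G 4)
    (D : MvPolynomial (Fin 4) (WittVector 2 k))
    (hD : 2 * D = φ (f + 2 * G) - (f + 2 * G) ^ 2) :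
    ¬ (MvPolynomial.map r (f * D)
          ∈ Ideal.span ({X 0 ^ 4, X 1 ^ 4, X 2 ^ 4, X 3 ^ 4} : Set (MvPolynomial (Fin 4) k)) ∧
       MvPolynomial.map r (f * D ^ 3)
          ∈ Ideal.span ({X 0 ^ 8, X 1 ^ 8, X 2 ^ 8, X 3 ^ 8} : Set (MvPolynomial (Fin 4) k))) := by
  rintro ⟨hm1, hm2⟩
  -- scalars in char 2
  have h2k : (2 : k) = 0 := by
    have := CharP.cast_eq_zero k 2
    simpa using this
  have h2K : (2 : MvPolynomial (Fin 4) k) = 0 := by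
    have := CharP.cast_eq_zero (MvPolynomial (Fin 4) k) 2
    simpa using this
  -- 2 is a nonzerodivisor upstairs
  have h2W : (2 : WittVector 2 k) ≠ 0 := by
    have := WittVector.p_nonzero 2 k
    simpa using this
  have h2S : (2 : MvPolynomial (Fin 4) (WittVector 2 k)) ≠ 0 := by
    intro h
    apply h2W
    have := congrArg MvPolynomial.constantCoeff h
    rw [map_ofNat, map_zero] at this
    exact this
  -- the explicit polynomial E with φ f - f² = 2 E
  set E : MvPolynomial (Fin 4) (WittVector 2 k) :=
    -(X 3 ^ 2 * (X 0 * X 1 * X 2 * (X 0 + X 1 + X 2)))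
      - X 0 ^ 2 * X 1 ^ 2 * X 2 ^ 2 * (X 0 * X 1 + X 1 * X 2 + X 0 * X 2) with hE
  have hphif : φ f = X 3 ^ 4 + X 0 ^ 2 * X 1 ^ 2 * X 2 ^ 2 * (X 0 ^ 2 + X 1 ^ 2 + X 2 ^ 2) := by
    rw [hf]
    simp only [map_add, map_mul, map_pow, hφX]
    ring
  have hkey : 2 * D = 2 * (E + φ G - 2 * (f * G) - 2 * G ^ 2) := by
    rw [hD]
    have hsplit : φ (f + 2 * G) = φ f + 2 * φ G := by
      rw [map_add, map_mul, map_ofNat]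
    rw [hsplit, hphif, hf, hE]
    ring
  have hDeq : D = E + φ G - 2 * (f * G) - 2 * G ^ 2 := mul_left_cancel₀ h2S hkey
  -- reduction of φ composed with map r is squaring
  have hρφ : MvPolynomial.map r (φ G) = (MvPolynomial.map r G) * (MvPolynomial.map r G) := by
    have hcomp : (MvPolynomial.map r).comp φ
        = (frobenius (MvPolynomial (Fin 4) k) 2).comp (MvPolynomial.map r) := by
      apply MvPolynomial.ringHom_ext
      · intro a
        simp only [RingHom.coe_comp, Function.comp_apply, hφC, MvPolynomial.map_C,
          frobenius_def, hr, WittVector.coeff_frobenius_charP]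
        rw [← MvPolynomial.C_pow]
      · intro i
        simp only [RingHom.coe_comp, Function.comp_apply, hφX, map_pow,
          MvPolynomial.map_X, frobenius_def]
    have := RingHom.congr_fun hcomp G
    simp only [RingHom.coe_comp, Function.comp_apply, frobenius_def] at this
    rw [this, pow_two]
  set g : MvPolynomial (Fin 4) k := MvPolynomial.map r G with hgdef
  have hg : IsWeightedHomogeneous wgt g 4 := by
    intro d hd
    apply hG
    intro h0
    apply hd
    rw [hgdef, MvPolynomial.coeff_map, h0, map_zero]
  -- monomial forms
  set FB : MvPolynomial (Fin 4) k := me 0 0 0 2 + me 2 1 1 0 + me 1 2 1 0 + me 1 1 2 0 with hFB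
  set EB : MvPolynomial (Fin 4) k :=
    me 2 1 1 2 + me 1 2 1 2 + me 1 1 2 2 + me 3 3 2 0 + me 2 3 3 0 + me 3 2 3 0 with hEB
  have hfme : MvPolynomial.map r f = FB := by
    rw [hf, hFB]
    simp only [map_add, map_mul, map_pow, MvPolynomial.map_X]
    rw [X_as_me_0, X_as_me_1, X_as_me_2, X_as_me_3]
    simp only [pow_two, me_mul, mul_add, add_mul]
    norm_num
    ring
  have hDb : MvPolynomial.map r D = EB + g * g := by
    rw [hDeq, hE]
    simp only [map_sub, map_add, map_mul, map_pow, map_neg, MvPolynomial.map_X, map_ofNat]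
    rw [hρφ, ← hgdef]
    rw [hEB]
    rw [X_as_me_0, X_as_me_1, X_as_me_2, X_as_me_3]
    simp only [pow_two, me_mul, mul_add, add_mul, neg_add, neg_neg, neg_mul]
    norm_num
    linear_combination (- me 2 1 1 2 - me 1 2 1 2 - me 1 1 2 2 - me 3 3 2 0 - me 2 3 3 0
      - me 3 2 3 0 - (MvPolynomial.map r f) * g - g * g) * h2K
  have hPform : MvPolynomial.map r (f * D) = FB * EB + FB * (g * g) := by
    rw [map_mul, hfme, hDb]
    ring
  have hQform : MvPolynomial.map r (f * D ^ 3) =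
      FB * (EB * (EB * EB)) + FB * (EB * (EB * (g * g))) + FB * (EB * ((g * g) * (g * g)))
        + FB * (((g * g) * g) * ((g * g) * g))
        + 2 * (FB * (EB * (EB * (g * g))) + FB * (EB * ((g * g) * (g * g)))) := by
    rw [map_mul, map_pow, hfme, hDb]
    ring
  have c1 : coeff (e 3 3 2 2) (MvPolynomial.map r (f * D)) = 0 :=
    span_coeff_zero _ 4 hm1 _ (by norm_num) (by norm_num) (by norm_num) (by norm_num)
  rw [hPform, hFB, hEB] at c1
  simp only [add_mul, MvPolynomial.coeff_add, coeff_me_mul, coeff_me, coeff_mul_self] at c1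
  norm_num at c1
  have c2 : coeff (e 3 2 3 2) (MvPolynomial.map r (f * D)) = 0 :=
    span_coeff_zero _ 4 hm1 _ (by norm_num) (by norm_num) (by norm_num) (by norm_num)
  rw [hPform, hFB, hEB] at c2
  simp only [add_mul, MvPolynomial.coeff_add, coeff_me_mul, coeff_me, coeff_mul_self] at c2
  norm_num at c2
  have c3 : coeff (e 2 3 3 2) (MvPolynomial.map r (f * D)) = 0 :=
    span_coeff_zero _ 4 hm1 _ (by norm_num) (by norm_num) (by norm_num) (by norm_num)
  rw [hPform, hFB, hEB] at c3
  simp only [add_mul, MvPolynomial.coeff_add, coeff_me_mul, coeff_me, coeff_mul_self] at c3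
  norm_num at c3
  -- extract values
  have hval : ∀ t : k, 3 + t ^ 2 = 0 → t = 1 := by
    intro t ht
    have hsq : (t - 1) ^ 2 = 0 := by
      linear_combination ht + (-1 - t) * h2k
    have := pow_eq_zero_iff (n := 2) (by norm_num) |>.mp hsq
    exact sub_eq_zero.mp this
  have ht1 : coeff (e 1 1 0 1) g = 1 := hval _ c1
  have ht2 : coeff (e 1 0 1 1) g = 1 := hval _ c2
  have ht3 : coeff (e 0 1 1 1) g = 1 := hval _ c3
  -- g^3 coefficients
  have hg31 : coeff (e 3 1 2 3) ((g * g) * g)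
      = coeff (e 1 0 1 1) g ^ 2 * coeff (e 1 1 0 1) g :=
    coeff_g3_single hg 3 1 2 3 1 0 1 1 1 1 0 1 (by norm_num) (by norm_num) (by norm_num)
      (by norm_num) (by norm_num) (by norm_num) (by omega)
  have hg32 : coeff (e 1 3 2 3) ((g * g) * g)
      = coeff (e 0 1 1 1) g ^ 2 * coeff (e 1 1 0 1) g :=
    coeff_g3_single hg 1 3 2 3 0 1 1 1 1 1 0 1 (by norm_num) (by norm_num) (by norm_num)
      (by norm_num) (by norm_num) (by norm_num) (by omega)
  have hg33 : coeff (e 1 2 3 3) ((g * g) * g)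
      = coeff (e 0 1 1 1) g ^ 2 * coeff (e 1 0 1 1) g :=
    coeff_g3_single hg 1 2 3 3 0 1 1 1 1 0 1 1 (by norm_num) (by norm_num) (by norm_num)
      (by norm_num) (by norm_num) (by norm_num) (by omega)
  have hg34 := coeff_g3_triple hg
  have hgz := coeff_g_zero hg
  -- the four coefficients of f * D^3
  have cq1 : coeff (e 7 3 6 6) (MvPolynomial.map r (f * D ^ 3)) = 0 :=
    span_coeff_zero _ 8 hm2 _ (by norm_num) (by norm_num) (by norm_num) (by norm_num)
  rw [hQform, hFB, hEB, h2K] at cq1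
  simp only [add_mul, MvPolynomial.coeff_add, coeff_me_mul, coeff_me, coeff_mul_self,
    hg31, hg32, hg33, hg34, hgz, zero_mul, ht1, ht2, ht3] at cq1
  norm_num [ht1, ht2, ht3] at cq1
  have cq2 : coeff (e 3 7 6 6) (MvPolynomial.map r (f * D ^ 3)) = 0 :=
    span_coeff_zero _ 8 hm2 _ (by norm_num) (by norm_num) (by norm_num) (by norm_num)
  rw [hQform, hFB, hEB, h2K] at cq2
  simp only [add_mul, MvPolynomial.coeff_add, coeff_me_mul, coeff_me, coeff_mul_self,
    hg31, hg32, hg33, hg34, hgz, zero_mul, ht1, ht2, ht3] at cq2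
  norm_num [ht1, ht2, ht3] at cq2
  have cq3 : coeff (e 3 6 7 6) (MvPolynomial.map r (f * D ^ 3)) = 0 :=
    span_coeff_zero _ 8 hm2 _ (by norm_num) (by norm_num) (by norm_num) (by norm_num)
  rw [hQform, hFB, hEB, h2K] at cq3
  simp only [add_mul, MvPolynomial.coeff_add, coeff_me_mul, coeff_me, coeff_mul_self,
    hg31, hg32, hg33, hg34, hgz, zero_mul, ht1, ht2, ht3] at cq3
  norm_num [ht1, ht2, ht3] at cq3
  have cq4 : coeff (e 5 5 6 6) (MvPolynomial.map r (f * D ^ 3)) = 0 :=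
    span_coeff_zero _ 8 hm2 _ (by norm_num) (by norm_num) (by norm_num) (by norm_num)
  rw [hQform, hFB, hEB, h2K] at cq4
  simp only [add_mul, MvPolynomial.coeff_add, coeff_me_mul, coeff_me, coeff_mul_self,
    hg31, hg32, hg33, hg34, hgz, zero_mul, ht1, ht2, ht3] at cq4
  norm_num [ht1, ht2, ht3] at cq4
  -- final contradiction
  have hu1 : coeff (e 2 0 0 1) g = 1 := hval _ (by
    linear_combination cq1 + (-3 - coeff (e 2 0 2 0) g ^ 2) * h2k)
  have hu2 : coeff (e 0 2 0 1) g = 1 := hval _ (by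
    linear_combination cq2 + (-3 - coeff (e 0 2 2 0) g ^ 2) * h2k)
  have hu3 : coeff (e 0 0 2 1) g = 1 := hval _ (by
    linear_combination cq3 + (-3 - coeff (e 0 2 2 0) g ^ 2) * h2k)
  have hS : coeff (e 2 0 0 1) g + coeff (e 0 2 0 1) g + coeff (e 0 0 2 1) g = 0 := by
    have hq : (coeff (e 2 0 0 1) g + coeff (e 0 2 0 1) g + coeff (e 0 0 2 1) g) ^ 2 = 0 := by
      linear_combination cq4 + (-19 - 6 * coeff (e 0 0 0 2) g ^ 2
        - coeff (e 1 1 2 0) g ^ 2) * h2k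
    exact pow_eq_zero_iff (n := 2) (by norm_num) |>.mp hq
  rw [hu1, hu2, hu3] at hS
  have hone : (1 : k) = 0 := by linear_combination hS - h2k
  exact one_ne_zero hone
end

section
/- For every D ∈ S with 2D = φ(f) − f², the element ρ(D) lies in the ideal m^[4] = (x⁴, y⁴, z⁴, w⁴, u⁴, v⁴) of k[x,y,z,w,u,v]. (This is the key computation showing that W(k)[x,y,z,w,u,v]/(f) is not quasi-F-split.) -/
open MvPolynomial

set_option maxHeartbeats 1000000 in
/-- Fermat quintic fourfold: `W(k)[x,y,z,w,u,v]/(f)` is not quasi-F-split.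
`k` is an algebraically closed field of characteristic 2, `S = W(k)[x,y,z,w,u,v]`,
`φ` acts on coefficients by the Witt vector Frobenius and squares the variables,
`ρ` reduces coefficients via the 0-th Witt coordinate, and
`f = x⁵ + y⁵ + z⁵ + w⁵ + u⁵ + v⁵`. For every `D ∈ S` with `2D = φ(f) − f²`, one has
`ρ(D) ∈ (x⁴, y⁴, z⁴, w⁴, u⁴, v⁴)`. -/
theorem stmt18 (k : Type*) [Field k] [IsAlgClosed k] [CharP k 2]
    (φ : MvPolynomial (Fin 6) (WittVector 2 k) →+* MvPolynomial (Fin 6) (WittVector 2 k))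
    (hφC : ∀ α : WittVector 2 k, φ (C α) = C (WittVector.frobenius α))
    (hφX : ∀ i : Fin 6, φ (X i) = X i ^ 2)
    (r : WittVector 2 k →+* k)
    (hr : ∀ α : WittVector 2 k, r α = α.coeff 0)
    (f : MvPolynomial (Fin 6) (WittVector 2 k))
    (hf : f = X 0 ^ 5 + X 1 ^ 5 + X 2 ^ 5 + X 3 ^ 5 + X 4 ^ 5 + X 5 ^ 5)
    (D : MvPolynomial (Fin 6) (WittVector 2 k))
    (hD : 2 * D = φ f - f ^ 2) :
    MvPolynomial.map r D
      ∈ Ideal.span ({X 0 ^ 4, X 1 ^ 4, X 2 ^ 4, X 3 ^ 4, X 4 ^ 4, X 5 ^ 4} :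
          Set (MvPolynomial (Fin 6) k)) := by
  have : Fact (Nat.Prime 2) := ⟨by norm_num⟩
  -- the cross-term polynomial
  set E : MvPolynomial (Fin 6) (WittVector 2 k) :=
    X 0 ^ 5 * X 1 ^ 5 + X 0 ^ 5 * X 2 ^ 5 + X 0 ^ 5 * X 3 ^ 5 + X 0 ^ 5 * X 4 ^ 5 +
    X 0 ^ 5 * X 5 ^ 5 + X 1 ^ 5 * X 2 ^ 5 + X 1 ^ 5 * X 3 ^ 5 + X 1 ^ 5 * X 4 ^ 5 +
    X 1 ^ 5 * X 5 ^ 5 + X 2 ^ 5 * X 3 ^ 5 + X 2 ^ 5 * X 4 ^ 5 + X 2 ^ 5 * X 5 ^ 5 +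
    X 3 ^ 5 * X 4 ^ 5 + X 3 ^ 5 * X 5 ^ 5 + X 4 ^ 5 * X 5 ^ 5 with hE
  have hφf : φ f = X 0 ^ 10 + X 1 ^ 10 + X 2 ^ 10 + X 3 ^ 10 + X 4 ^ 10 + X 5 ^ 10 := by
    simp only [hf, map_add, map_pow, hφX]
    ring
  have key : 2 * D = 2 * (-E) := by
    rw [hD, hφf, hf, hE]; ring
  have h2 : (2 : MvPolynomial (Fin 6) (WittVector 2 k)) ≠ 0 := by
    have hp : ((2 : ℕ) : WittVector 2 k) ≠ 0 := WittVector.p_nonzero 2 k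
    intro h
    apply hp
    have hC : (2 : MvPolynomial (Fin 6) (WittVector 2 k)) = C ((2 : ℕ) : WittVector 2 k) := by
      push_cast
      simp [map_ofNat]
    rw [hC] at h
    exact (MvPolynomial.C_eq_zero).mp h
  have hDE : D = -E := mul_left_cancel₀ h2 key
  rw [hDE, hE]
  simp only [map_neg, map_add, map_mul, map_pow, MvPolynomial.map_X]
  refine neg_mem ?_
  have mem : ∀ i : Fin 6, (X i : MvPolynomial (Fin 6) k) ^ 4 ∈
      Ideal.span ({X 0 ^ 4, X 1 ^ 4, X 2 ^ 4, X 3 ^ 4, X 4 ^ 4, X 5 ^ 4} :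
          Set (MvPolynomial (Fin 6) k)) := by
    intro i
    apply Ideal.subset_span
    fin_cases i
    · exact Set.mem_insert _ _
    · exact Set.mem_insert_of_mem _ (Set.mem_insert _ _)
    · exact Set.mem_insert_of_mem _ (Set.mem_insert_of_mem _ (Set.mem_insert _ _))
    · exact Set.mem_insert_of_mem _ (Set.mem_insert_of_mem _
        (Set.mem_insert_of_mem _ (Set.mem_insert _ _)))
    · exact Set.mem_insert_of_mem _ (Set.mem_insert_of_mem _ (Set.mem_insert_of_mem _
        (Set.mem_insert_of_mem _ (Set.mem_insert _ _))))
    · exact Set.mem_insert_of_mem _ (Set.mem_insert_of_mem _ (Set.mem_insert_of_mem _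
        (Set.mem_insert_of_mem _ (Set.mem_insert_of_mem _ rfl))))
  have tm : ∀ i j : Fin 6, (X i : MvPolynomial (Fin 6) k) ^ 5 * X j ^ 5 ∈
      Ideal.span ({X 0 ^ 4, X 1 ^ 4, X 2 ^ 4, X 3 ^ 4, X 4 ^ 4, X 5 ^ 4} :
          Set (MvPolynomial (Fin 6) k)) := by
    intro i j
    have : (X i : MvPolynomial (Fin 6) k) ^ 5 * X j ^ 5 = X i ^ 4 * (X i * X j ^ 5) := by ring
    rw [this]
    exact Ideal.mul_mem_right _ _ (mem i)
  repeat' apply Ideal.add_mem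
  all_goals exact tm _ _
end
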